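/- Given a finite point set P in R^d with minimum enclosing ball of center C and radius R, for any query point q in R^d there exists a point p in P such that dist(q,p) ≤ sqrt(dist(q,C)^2 + R^2). -/
import Mathlib

open RealInnerProductSpace


/-- Given a finite point set `P` in `ℝ^d` whose minimum enclosing ball has
center `C` and radius `R`, for any query point `q` there exists `p ∈ P` with
`dist q p ≤ sqrt (dist q C ^ 2 + R ^ 2)`. -/
theorem exists_point_pythagorean
    (d : ℕ) (P : Finset (EuclideanSpace ℝ (Fin d))) (hP : P.Nonempty)
    (C : EuclideanSpace ℝ (Fin d)) (R : ℝ)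
    (hEncl : ∀ p ∈ P, dist p C ≤ R)
    (hMin : ∀ (c : EuclideanSpace ℝ (Fin d)) (r : ℝ),
      (∀ p ∈ P, dist p c ≤ r) → R ≤ r)
    (q : EuclideanSpace ℝ (Fin d)) :
    ∃ p ∈ P, dist q p ≤ Real.sqrt (dist q C ^ 2 + R ^ 2) := by
  have hR0 : 0 ≤ R := le_trans dist_nonneg (hEncl _ hP.choose_spec)
  -- Step 1: some point has nonnegative inner product with q - C.
  have key : ∃ p ∈ P, 0 ≤ ⟪p - C, q - C⟫ := by
    by_contra hcon
    push_neg at hcon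
    have hqC : q ≠ C := by
      intro h
      have := hcon _ hP.choose_spec
      rw [h, sub_self, inner_zero_right] at this
      exact lt_irrefl 0 this
    have hn : (0:ℝ) < ‖q - C‖ ^ 2 := by
      have h := norm_sub_pos_iff.mpr hqC
      positivity
    -- m : max of inner products, m < 0
    set f : EuclideanSpace ℝ (Fin d) → ℝ := fun p => ⟪p - C, q - C⟫ with hf
    have hne : (P.image f).Nonempty := hP.image f
    set m := (P.image f).max' hne with hm
    have hm_neg : m < 0 := by
      obtain ⟨p₀, hp₀, hfp₀⟩ := Finset.mem_image.mp ((P.image f).max'_mem hne)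
      rw [hm] at *
      rw [← hfp₀]
      exact hcon _ hp₀
    set t := (-m) / ‖q - C‖ ^ 2 with ht
    have ht0 : 0 < t := div_pos (by linarith) hn
    set C' := C - t • (q - C) with hC'
    have hdist : ∀ p ∈ P, dist p C' < R := by
      intro p hp
      have hle : f p ≤ m := Finset.le_max' _ _ (Finset.mem_image_of_mem f hp)
      have hsq : dist p C' ^ 2 = ‖p - C‖ ^ 2 + 2 * t * (f p) + t ^ 2 * ‖q - C‖ ^ 2 := by
        rw [dist_eq_norm, hC']
        have : p - (C - t • (q - C)) = (p - C) + t • (q - C) := by abel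
        rw [this, norm_add_sq_real, real_inner_smul_right, norm_smul]
        simp [hf, abs_of_pos ht0, mul_pow]
        ring
      have htq : t * ‖q - C‖ ^ 2 = -m := by
        rw [ht, div_mul_cancel₀]
        exact ne_of_gt hn
      have hpC : ‖p - C‖ ^ 2 ≤ R ^ 2 := by
        have h1 : dist p C ≤ R := hEncl p hp
        rw [dist_eq_norm] at h1
        nlinarith [norm_nonneg (p - C)]
      have hlt : dist p C' ^ 2 < R ^ 2 := by
        have h1 : t ^ 2 * ‖q - C‖ ^ 2 = t * (t * ‖q - C‖ ^ 2) := by ring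
        rw [hsq, h1, htq]
        have h2 : 2 * t * f p ≤ 2 * t * m := by nlinarith
        nlinarith
      have := dist_nonneg (x := p) (y := C')
      nlinarith
    -- the max of the new distances is a strictly smaller radius
    set g : EuclideanSpace ℝ (Fin d) → ℝ := fun p => dist p C' with hg
    have hne' : (P.image g).Nonempty := hP.image g
    set r := (P.image g).max' hne' with hr
    have hrR : r < R := by
      obtain ⟨p₀, hp₀, hfp₀⟩ := Finset.mem_image.mp ((P.image g).max'_mem hne')
      rw [hr, ← hfp₀]
      exact hdist _ hp₀
    have : R ≤ r := hMin C' r (fun p hp => Finset.le_max' _ _ (Finset.mem_image_of_mem g hp))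
    linarith
  obtain ⟨p, hp, hinner⟩ := key
  refine ⟨p, hp, ?_⟩
  rw [show dist q p = ‖(q - C) - (p - C)‖ by rw [dist_eq_norm]; congr 1; abel]
  have hsq : ‖(q - C) - (p - C)‖ ^ 2
      = ‖q - C‖ ^ 2 - 2 * ⟪q - C, p - C⟫ + ‖p - C‖ ^ 2 := norm_sub_sq_real _ _
  have hpC : ‖p - C‖ ^ 2 ≤ R ^ 2 := by
    have h1 : dist p C ≤ R := hEncl p hp
    rw [dist_eq_norm] at h1
    nlinarith [norm_nonneg (p - C)]
  have hin : (0:ℝ) ≤ ⟪q - C, p - C⟫ := by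
    rw [real_inner_comm]; exact hinner
  have hbound : ‖(q - C) - (p - C)‖ ^ 2 ≤ dist q C ^ 2 + R ^ 2 := by
    rw [hsq, dist_eq_norm]
    nlinarith
  have : (0:ℝ) ≤ ‖(q - C) - (p - C)‖ := norm_nonneg _
  calc ‖(q - C) - (p - C)‖ = Real.sqrt (‖(q - C) - (p - C)‖ ^ 2) := by
        rw [Real.sqrt_sq this]
    _ ≤ Real.sqrt (dist q C ^ 2 + R ^ 2) := Real.sqrt_le_sqrt hbound
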